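/- Let (c_l)_{l∈ℤ} be a sequence of complex numbers with c_l → 0 and let (n_k) be a sequence of natural numbers tending to infinity such that lim_{k→∞} S_{n_k}(x) = 0 for every real x. Then the support K of the distribution Σ_l c_l e(lx) is nowhere dense in ℝ/ℤ. -/

import Mathlib

open Filter MeasureTheory

/-- `e(x) = e^{2πix}`. -/
noncomputable def expc (x : ℝ) : ℂ := Complex.exp (2 * (Real.pi : ℂ) * Complex.I * (x : ℂ))

/-- Symmetric partial sums `S_n(x) = Σ_{l=-n}^n c_l e(lx)`. -/
noncomputable def Sc (c : ℤ → ℂ) (n : ℕ) (x : ℝ) : ℂ :=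
  ∑ l ∈ Finset.Icc (-(n : ℤ)) (n : ℤ), c l * expc ((l : ℝ) * x)

/-- Fourier coefficient `φ̂(l) = ∫₀¹ φ(x) e(-lx) dx` of a 1-periodic function. -/
noncomputable def fcC (φ : ℝ → ℂ) (l : ℤ) : ℂ :=
  ∫ x in (0:ℝ)..1, φ x * expc (-(l : ℝ) * x)

/-- The support of the distribution `Σ_l c_l e(lx)`, viewed as a 1-periodic subset of `ℝ`
(representing a subset of `ℝ/ℤ`): the complement of the union of all (1-periodic) open
sets `U` such that `Σ_l c_l φ̂(l) = 0` for every `C^∞` 1-periodic `φ` supported in `U`. -/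
def distSupport (c : ℤ → ℂ) : Set ℝ :=
  {x : ℝ | ¬ ∃ U : Set ℝ, IsOpen U ∧ (∀ y : ℝ, y ∈ U ↔ y + 1 ∈ U) ∧ x ∈ U ∧
    ∀ φ : ℝ → ℂ, ContDiff ℝ (⊤ : ℕ∞) φ → Function.Periodic φ 1 →
      (∀ y : ℝ, y ∉ U → φ y = 0) → ∑' l : ℤ, c l * fcC φ l = 0}

lemma expc_add (a b : ℝ) : expc (a + b) = expc a * expc b := by
  unfold expc
  push_cast
  rw [mul_add, Complex.exp_add]

lemma expc_int (l : ℤ) : expc (l : ℝ) = 1 := by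
  unfold expc
  push_cast
  rw [mul_comm]
  exact Complex.exp_int_mul_two_pi_mul_I l

lemma continuous_Sc (c : ℤ → ℂ) (n : ℕ) : Continuous (Sc c n) := by
  unfold Sc expc
  exact continuous_finset_sum _ fun l _ => by fun_prop

lemma Sc_periodic (c : ℤ → ℂ) (n : ℕ) (x : ℝ) : Sc c n (x + 1) = Sc c n x := by
  unfold Sc
  refine Finset.sum_congr rfl fun l _ => ?_
  rw [mul_add, mul_one, expc_add, expc_int, mul_one]

lemma partial_eq (c : ℤ → ℂ) (φ : ℝ → ℂ) (hφ : Continuous φ) (m : ℕ) :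
    ∑ l ∈ Finset.Icc (-(m:ℤ)) (m:ℤ), c l * fcC φ l
      = ∫ x in (0:ℝ)..1, φ x * Sc c m (-x) := by
  unfold fcC Sc
  have h1 : ∀ l ∈ Finset.Icc (-(m:ℤ)) (m:ℤ),
      c l * ∫ x in (0:ℝ)..1, φ x * expc (-(l:ℝ) * x)
        = ∫ x in (0:ℝ)..1, c l * (φ x * expc (-(l:ℝ) * x)) := fun l _ =>
    (intervalIntegral.integral_const_mul _ _).symm
  rw [Finset.sum_congr rfl h1, ← intervalIntegral.integral_finset_sum]
  · refine intervalIntegral.integral_congr fun x _ => ?_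
    rw [Finset.mul_sum]
    refine Finset.sum_congr rfl fun l _ => ?_
    have : (l:ℝ) * (-x) = -(l:ℝ) * x := by ring
    rw [this]; ring
  · intro l _
    apply Continuous.intervalIntegrable
    unfold expc
    fun_prop

lemma tendsto_Icc_finset (n : ℕ → ℕ) (hn : Tendsto n atTop atTop) :
    Tendsto (fun k => Finset.Icc (-(n k : ℤ)) (n k : ℤ)) atTop atTop := by
  rw [tendsto_atTop]
  intro s
  have hm : ∀ᶠ k in atTop, (s.sup fun i => i.natAbs) ≤ n k := hn.eventually_ge_atTop _
  filter_upwards [hm] with k hk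
  intro i hi
  have h1 : i.natAbs ≤ n k := le_trans (Finset.le_sup hi) hk
  have h2 : |i| ≤ (n k : ℤ) := by
    rw [Int.abs_eq_natAbs]; exact_mod_cast h1
  simp [Finset.mem_Icc]
  constructor <;> [linarith [neg_abs_le i]; linarith [le_abs_self i]]

lemma key_tsum (c : ℤ → ℂ) (n : ℕ → ℕ) (hn : Tendsto n atTop atTop)
    (hconv : ∀ x : ℝ, Tendsto (fun k => Sc c (n k) x) atTop (nhds 0))
    (M : ℝ) (U : Set ℝ) (hU : ∀ x ∈ U, ∀ k, ‖Sc c (n k) (-x)‖ ≤ M)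
    (φ : ℝ → ℂ) (hφ : Continuous φ) (hsupp : ∀ y ∉ U, φ y = 0) :
    ∑' l : ℤ, c l * fcC φ l = 0 := by
  by_cases hs : Summable (fun l : ℤ => c l * fcC φ l)
  · have h1 : Tendsto (fun k => ∑ l ∈ Finset.Icc (-(n k : ℤ)) (n k : ℤ), c l * fcC φ l)
        atTop (nhds (∑' l, c l * fcC φ l)) :=
      hs.hasSum.comp (tendsto_Icc_finset n hn)
    have h2 : Tendsto (fun k => ∫ x in (0:ℝ)..1, φ x * Sc c (n k) (-x)) atTop (nhds 0) := by
      have h0 : (0:ℂ) = ∫ x in (0:ℝ)..1, (0:ℂ) := by simp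
      rw [h0]
      apply intervalIntegral.tendsto_integral_filter_of_dominated_convergence
        (fun x => ‖φ x‖ * M)
      · filter_upwards with k
        exact ((hφ.mul ((continuous_Sc c (n k)).comp continuous_neg)).aestronglyMeasurable)
      · filter_upwards with k
        filter_upwards with x _
        rw [norm_mul]
        by_cases hx : x ∈ U
        · exact mul_le_mul_of_nonneg_left (hU x hx k) (norm_nonneg _)
        · simp [hsupp x hx]
      · exact (Continuous.intervalIntegrable (by fun_prop) _ _)
      · filter_upwards with x _
        simpa using (tendsto_const_nhds (x := φ x)).mul (hconv (-x))
    have h3 : ∀ k, ∑ l ∈ Finset.Icc (-(n k : ℤ)) (n k : ℤ), c l * fcC φ l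
        = ∫ x in (0:ℝ)..1, φ x * Sc c (n k) (-x) := fun k => partial_eq c φ hφ (n k)
    exact tendsto_nhds_unique (by simpa [h3] using h1) h2
  · exact tsum_eq_zero_of_not_summable hs

/-- If `c_l → 0`, `n_k → ∞` and `S_{n_k}(x) → 0` for every `x`, then the support of the
distribution `Σ c_l e(lx)` is nowhere dense (in `ℝ/ℤ`, equivalently in `ℝ` since it is
1-periodic). -/
theorem statement9 (c : ℤ → ℂ) (n : ℕ → ℕ)
    (hc : Tendsto c cofinite (nhds 0))
    (hn : Tendsto n atTop atTop)
    (hconv : ∀ x : ℝ, Tendsto (fun k => Sc c (n k) x) atTop (nhds 0)) :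
    interior (closure (distSupport c)) = ∅ := by
  classical
  set E : ℕ → Set ℝ := fun M => {x | ∀ k, ‖Sc c (n k) (-x)‖ ≤ (M:ℝ)} with hE
  have hEclosed : ∀ M, IsClosed (E M) := by
    intro M
    have : E M = ⋂ k, {x | ‖Sc c (n k) (-x)‖ ≤ (M:ℝ)} := by ext x; simp [hE]
    rw [this]
    exact isClosed_iInter fun k =>
      isClosed_le (((continuous_Sc c (n k)).comp continuous_neg).norm) continuous_const
  have hEcover : ⋃ M, E M = Set.univ := by
    ext x
    simp only [Set.mem_iUnion, Set.mem_univ, iff_true]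
    obtain ⟨b, hb⟩ := ((hconv (-x)).norm).bddAbove_range
    refine ⟨⌈b⌉₊, fun k => le_trans ?_ (Nat.le_ceil b)⟩
    simpa using hb (Set.mem_range_self k)
  have hEper : ∀ M (y : ℝ), y ∈ interior (E M) ↔ y + 1 ∈ interior (E M) := by
    intro M
    have hpre : (fun y : ℝ => y + 1) ⁻¹' (E M) = E M := by
      ext y
      have hh : ∀ k, Sc c (n k) (-(y+1)) = Sc c (n k) (-y) := fun k => by
        have h := Sc_periodic c (n k) (-(y+1))
        rw [show -(y+1) + 1 = -y by ring] at h
        exact h.symm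
      simp only [Set.mem_preimage, hE, Set.mem_setOf_eq]
      exact forall_congr' fun k => by rw [hh k]
    have h2 : (fun y : ℝ => y + 1) ⁻¹' interior (E M) = interior (E M) := by
      have := (Homeomorph.addRight (1:ℝ)).preimage_interior (E M)
      simpa [hpre] using this
    intro y
    constructor
    · intro hy; rw [← h2] at hy; exact hy
    · intro hy; rw [← h2]; exact hy
  have hKclosed : IsClosed (distSupport c) := by
    rw [← isOpen_compl_iff, isOpen_iff_forall_mem_open]
    intro x hx
    simp only [distSupport, Set.mem_compl_iff, Set.mem_setOf_eq, not_not] at hx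
    obtain ⟨U, hUo, hUp, hxU, hUφ⟩ := hx
    refine ⟨U, fun y hy => ?_, hUo, hxU⟩
    simp only [distSupport, Set.mem_compl_iff, Set.mem_setOf_eq, not_not]
    exact ⟨U, hUo, hUp, hy, hUφ⟩
  rw [hKclosed.closure_eq, interior_eq_empty_iff_dense_compl]
  have hdense := dense_iUnion_interior_of_closed hEclosed hEcover
  refine hdense.mono ?_
  rintro x hx
  simp only [Set.mem_iUnion] at hx
  obtain ⟨M, hxM⟩ := hx
  simp only [Set.mem_compl_iff, distSupport, Set.mem_setOf_eq, not_not]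
  exact ⟨interior (E M), isOpen_interior, hEper M, hxM, fun φ hφ hper hsupp =>
    key_tsum c n hn hconv M _ (fun y hy k => by exact interior_subset hy k) φ hφ.continuous hsupp⟩
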